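/- The annihilator of M⁴₀₁ is the one-dimensional subspace spanned by e₄, and e₄ lies in the linear span of products of elements of M⁴₀₁ (indeed e₄ = e₂·e₂); consequently M⁴₀₁ has no annihilator component, i.e. there is no nonzero x ∈ Ann(M⁴₀₁) with M⁴₀₁ = A₀ ⊕ ℂx for a subalgebra A₀ containing all products. -/

import Mathlib

/-- The multiplication of the algebra `M⁴₀₁` on `ℂ⁴` (basis `e₁,…,e₄` = coordinates `0,…,3`),
determined bilinearly by `e₁e₁ = e₂`, `e₁e₂ = e₃`, `e₂e₁ = e₃`, `e₁e₃ = e₄`, `e₂e₂ = e₄`,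
`e₃e₁ = e₄`, all other products of basis vectors zero. -/
def m401mul (x y : Fin 4 → ℂ) : Fin 4 → ℂ :=
  ![0, x 0 * y 0, x 0 * y 1 + x 1 * y 0, x 0 * y 2 + x 1 * y 1 + x 2 * y 0]

/-- The basis vector `e₂` of `M⁴₀₁`. -/
def E2 : Fin 4 → ℂ := ![0, 1, 0, 0]
/-- The basis vector `e₄` of `M⁴₀₁`. -/
def E4 : Fin 4 → ℂ := ![0, 0, 0, 1]

lemma m401mul_e1_right (x : Fin 4 → ℂ) : m401mul x ![1, 0, 0, 0] = ![0, x 0, x 1, x 2] := by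
  ext i; fin_cases i <;> simp [m401mul]

lemma m401mul_smul_E4_left (c : ℂ) (y : Fin 4 → ℂ) : m401mul (c • E4) y = 0 := by
  ext i; fin_cases i <;> simp [m401mul, E4]

lemma m401mul_smul_E4_right (c : ℂ) (y : Fin 4 → ℂ) : m401mul y (c • E4) = 0 := by
  ext i; fin_cases i <;> simp [m401mul, E4]

lemma eq_smul_E4_of_m401mul_e1_right_eq_zero {x : Fin 4 → ℂ}
    (hx : m401mul x ![1, 0, 0, 0] = 0) : x = x 3 • E4 := by
  rw [m401mul_e1_right] at hx
  have h0 : x 0 = 0 := congrFun hx 1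
  have h1 : x 1 = 0 := congrFun hx 2
  have h2 : x 2 = 0 := congrFun hx 3
  ext i; fin_cases i <;> simp [E4, h0, h1, h2]

lemma m401mul_annihilates_iff (x : Fin 4 → ℂ) :
    (∀ y, m401mul x y = 0 ∧ m401mul y x = 0) ↔ ∃ c : ℂ, x = c • E4 := by
  constructor
  · exact fun h ↦ ⟨x 3, eq_smul_E4_of_m401mul_e1_right_eq_zero (h _).1⟩
  · rintro ⟨c, rfl⟩ y
    exact ⟨m401mul_smul_E4_left c y, m401mul_smul_E4_right c y⟩

lemma m401mul_E2_E2 : m401mul E2 E2 = E4 := by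
  ext i; fin_cases i <;> simp [m401mul, E2, E4]

/-- The annihilator of `M⁴₀₁` is the span of `e₄`; moreover `e₄ = e₂·e₂` is a product,
so `M⁴₀₁` has no annihilator component: there is no nonzero annihilator element `x` such
that `M⁴₀₁ = A₀ ⊕ ℂx` with all products lying in `A₀`. -/
theorem m401_no_annihilator_component :
    (∀ x : Fin 4 → ℂ, (∀ y, m401mul x y = 0 ∧ m401mul y x = 0) ↔ ∃ c : ℂ, x = c • E4) ∧
    m401mul E2 E2 = E4 ∧
    ¬ ∃ x : Fin 4 → ℂ, x ≠ 0 ∧ (∀ y, m401mul x y = 0 ∧ m401mul y x = 0) ∧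
        ∃ A₀ : Submodule ℂ (Fin 4 → ℂ), (∀ a b : Fin 4 → ℂ, m401mul a b ∈ A₀) ∧
          IsCompl A₀ (Submodule.span ℂ ({x} : Set (Fin 4 → ℂ))) := by
  refine ⟨m401mul_annihilates_iff, m401mul_E2_E2, ?_⟩
  rintro ⟨x, hx, hann, A₀, hprod, hcompl⟩
  obtain ⟨c, rfl⟩ := (m401mul_annihilates_iff x).1 hann
  have hmem : c • E4 ∈ A₀ := A₀.smul_mem c (m401mul_E2_E2 ▸ hprod E2 E2)
  exact (Submodule.disjoint_span_singleton' hx).1 hcompl.disjoint hmem
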